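/- arXiv:2212.01344 — 4 statements merged into one kernel-verified Lean document; each statement's English description precedes it below -/
import Mathlib

section
/- Every finite undirected graph admits a good orientation, i.e., an orientation of its edges such that every vertex of degree at least 2 has at least one outgoing edge and at least one incoming edge. -/
/-!
Induct on the number of edges. A longest trail `p` contains every edge at its two ends, since
otherwise it could be extended; hence `p` enters and leaves every vertex of degree at least 2
that it visits (a vertex left twice by a walk is also entered). Orient the edges of `p` along
`p` and the remaining edges by induction: a vertex off `p` keeps all of its edges.
-/

namespace SimpleGraph

variable {V : Type*} {G : SimpleGraph V}

/-- `(G.neighborSet v).Nontrivial` is the instance-free form of `2 ≤ G.degree v`. -/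
def IsGoodOrientation (G : SimpleGraph V) (o : Sym2 V → V × V) : Prop :=
  (∀ e ∈ G.edgeSet, e = s((o e).1, (o e).2)) ∧
    ∀ v, (G.neighborSet v).Nontrivial →
      (∃ e ∈ G.edgeSet, (o e).1 = v) ∧ ∃ e ∈ G.edgeSet, (o e).2 = v

namespace Walk

variable {u v w : V}

lemma exists_mem_darts_snd_eq_fst_of_mem_darts_tail {x : V} (h : G.Adj u x) {p : G.Walk x w}
    {d : G.Dart} (hd : d ∈ p.darts) : ∃ d' ∈ (cons h p).darts, d'.snd = d.fst := by
  have hfst := p.dart_fst_mem_support_of_mem_darts hd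
  rw [← cons_tail_support, List.mem_cons, ← map_snd_darts, List.mem_map] at hfst
  rcases hfst with hfst | ⟨d', hd', hsnd⟩
  · exact ⟨⟨(u, x), h⟩, List.mem_cons_self, hfst.symm⟩
  · exact ⟨d', List.mem_cons_of_mem _ hd', hsnd⟩

lemma exists_mem_darts_snd_eq_of_fst_eq {p : G.Walk u w} {d₁ d₂ : G.Dart}
    (hd₁ : d₁ ∈ p.darts) (hd₂ : d₂ ∈ p.darts) (hne : d₁ ≠ d₂) (hfst : d₁.fst = d₂.fst) :
    ∃ d ∈ p.darts, d.snd = d₁.fst := by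
  induction p with
  | nil => simp at hd₁
  | cons h p ih =>
    rw [darts_cons, List.mem_cons] at hd₁ hd₂
    rcases hd₁ with rfl | hd₁ <;> rcases hd₂ with rfl | hd₂
    · exact absurd rfl hne
    · rw [hfst]; exact exists_mem_darts_snd_eq_fst_of_mem_darts_tail h hd₂
    · exact exists_mem_darts_snd_eq_fst_of_mem_darts_tail h hd₁
    · obtain ⟨d, hd, hsnd⟩ := ih hd₁ hd₂
      exact ⟨d, List.mem_cons_of_mem _ hd, hsnd⟩

lemma exists_mem_darts_snd_eq {p : G.Walk u w} (hu : ∀ x, G.Adj u x → s(u, x) ∈ p.edges)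
    (hv : v ∈ p.support) (hnt : (G.neighborSet v).Nontrivial) :
    ∃ d ∈ p.darts, d.snd = v := by
  by_contra! hno
  rw [← cons_tail_support, List.mem_cons, ← map_snd_darts, List.mem_map] at hv
  obtain rfl | ⟨d, hd, hsnd⟩ := hv
  · have hleave : ∀ x, G.Adj v x → ∃ d ∈ p.darts, d.fst = v ∧ d.snd = x := fun x hx ↦ by
      obtain ⟨d, hd, he⟩ := List.mem_map.mp (hu x hx)
      rcases Sym2.eq_iff.mp he with hvx | ⟨-, hsnd⟩
      · exact ⟨d, hd, hvx⟩
      · exact absurd hsnd (hno d hd)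
    obtain ⟨x₁, hx₁, x₂, hx₂, hne⟩ := hnt
    obtain ⟨d₁, hd₁, hfst₁, rfl⟩ := hleave x₁ hx₁
    obtain ⟨d₂, hd₂, hfst₂, rfl⟩ := hleave x₂ hx₂
    obtain ⟨d, hd, hsnd⟩ := exists_mem_darts_snd_eq_of_fst_eq hd₁ hd₂
      (by rintro rfl; exact hne rfl) (hfst₁.trans hfst₂.symm)
    exact hno d hd (hsnd.trans hfst₁)
  · exact hno d hd hsnd

lemma exists_mem_darts_fst_eq {p : G.Walk u w} (hw : ∀ x, G.Adj w x → s(w, x) ∈ p.edges)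
    (hv : v ∈ p.support) (hnt : (G.neighborSet v).Nontrivial) :
    ∃ d ∈ p.darts, d.fst = v := by
  obtain ⟨d, hd, rfl⟩ :=
    p.reverse.exists_mem_darts_snd_eq (by simpa using hw) (by simpa using hv) hnt
  exact ⟨d.symm, mem_darts_reverse.mp hd, rfl⟩

lemma IsTrail.mem_edges_of_adj_start {p : G.Walk u w} (hp : p.IsTrail)
    (hmax : ∀ x y (q : G.Walk x y), q.IsTrail → q.length ≤ p.length) {x : V} (h : G.Adj u x) :
    s(u, x) ∈ p.edges := by
  by_contra hx
  have := hmax x w (cons h.symm p) (hp.cons h.symm (by rwa [Sym2.eq_swap]))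
  simp at this

lemma IsTrail.mem_edges_of_adj_end {p : G.Walk u w} (hp : p.IsTrail)
    (hmax : ∀ x y (q : G.Walk x y), q.IsTrail → q.length ≤ p.length) {x : V} (h : G.Adj w x) :
    s(w, x) ∈ p.edges := by
  simpa using hp.reverse.mem_edges_of_adj_start (by simpa using hmax) h

open Classical in
noncomputable def orient (p : G.Walk u w) (o : Sym2 V → V × V) (e : Sym2 V) : V × V :=
  if h : ∃ d ∈ p.darts, d.edge = e then h.choose.toProd else o e

lemma orient_edge {p : G.Walk u w} (hp : p.IsTrail) (o : Sym2 V → V × V) {d : G.Dart}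
    (hd : d ∈ p.darts) : p.orient o d.edge = d.toProd := by
  have h : ∃ d' ∈ p.darts, d'.edge = d.edge := ⟨d, hd, rfl⟩
  rw [orient, dif_pos h,
    List.inj_on_of_nodup_map hp.edges_nodup h.choose_spec.1 hd h.choose_spec.2]

lemma orient_of_notMem_edges (p : G.Walk u w) (o : Sym2 V → V × V) {e : Sym2 V}
    (he : e ∉ p.edges) : p.orient o e = o e := by
  refine dif_neg ?_
  rintro ⟨d, hd, rfl⟩
  exact he (List.mem_map_of_mem hd)

end Walk

theorem IsGoodOrientation.orient {p : G.Walk u w} (hp : p.IsTrail)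
    (hu : ∀ x, G.Adj u x → s(u, x) ∈ p.edges) (hw : ∀ x, G.Adj w x → s(w, x) ∈ p.edges)
    {o : Sym2 V → V × V} (ho : (G.deleteEdges {e | e ∈ p.edges}).IsGoodOrientation o) :
    G.IsGoodOrientation (p.orient o) := by
  have hdel {e : Sym2 V} :
      e ∈ (G.deleteEdges {e | e ∈ p.edges}).edgeSet ↔ e ∈ G.edgeSet ∧ e ∉ p.edges := by
    simp [edgeSet_deleteEdges]
  refine ⟨fun e he ↦ ?_, fun v hv ↦ ?_⟩
  · by_cases hep : e ∈ p.edges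
    · obtain ⟨d, hd, rfl⟩ := List.mem_map.mp hep
      rw [p.orient_edge hp o hd]
      rfl
    · rw [p.orient_of_notMem_edges o hep]
      exact ho.1 e (hdel.mpr ⟨he, hep⟩)
  by_cases hvp : v ∈ p.support
  · obtain ⟨d₁, hd₁, rfl⟩ := p.exists_mem_darts_fst_eq hw hvp hv
    obtain ⟨d₂, hd₂, hsnd⟩ := p.exists_mem_darts_snd_eq hu hvp hv
    refine ⟨⟨d₁.edge, d₁.edge_mem, ?_⟩, ⟨d₂.edge, d₂.edge_mem, ?_⟩⟩
    · rw [p.orient_edge hp o hd₁]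
    · rw [p.orient_edge hp o hd₂, hsnd]
  · have hnbr : (G.deleteEdges {e | e ∈ p.edges}).neighborSet v = G.neighborSet v := by
      ext x
      simp only [mem_neighborSet, deleteEdges_adj, Set.mem_ofPred_eq, and_iff_left_iff_imp]
      exact fun _ hvx ↦ hvp (p.fst_mem_support_of_mem_edges hvx)
    obtain ⟨⟨e₁, he₁, hfst⟩, ⟨e₂, he₂, hsnd⟩⟩ := ho.2 v (hnbr ▸ hv)
    rw [hdel] at he₁ he₂
    exact ⟨⟨e₁, he₁.1, by rwa [p.orient_of_notMem_edges o he₁.2]⟩,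
      ⟨e₂, he₂.1, by rwa [p.orient_of_notMem_edges o he₂.2]⟩⟩

theorem exists_isGoodOrientation (G : SimpleGraph V) [Finite G.edgeSet] :
    ∃ o, G.IsGoodOrientation o := by
  induction hn : G.edgeSet.ncard using Nat.strong_induction_on generalizing G with
  | _ n ih =>
    rcases G.edgeSet.eq_empty_or_nonempty with hG | hG
    · refine ⟨Quot.out, fun e he ↦ by simp [hG] at he, fun v ⟨x, hx, _⟩ ↦ ?_⟩
      simpa [hG] using G.mem_edgeSet.mpr hx
    obtain ⟨a, b, hab⟩ : ∃ a b, G.Adj a b := Sym2.exists.mp hG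
    have : Nonempty V := ⟨a⟩
    obtain ⟨u, w, p, hp, hmax⟩ := Walk.exists_isTrail_forall_isTrail_length_le_length G
    have hsub : (G.deleteEdges {e | e ∈ p.edges}).edgeSet ⊂ G.edgeSet := by
      have hlen : 0 < p.edges.length :=
        p.length_edges ▸ hmax a b (.cons hab .nil) (by simp)
      obtain ⟨e, he⟩ := List.exists_mem_of_length_pos hlen
      rw [edgeSet_deleteEdges, Set.sdiff_ssubset_left_iff]
      exact ⟨e, p.edges_subset_edgeSet he, he⟩
    have := Finite.Set.subset G.edgeSet hsub.subset
    obtain ⟨o, ho⟩ := ih _ (hn ▸ Set.ncard_lt_ncard hsub) _ rfl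
    exact ⟨p.orient o, .orient hp (fun _ ↦ hp.mem_edges_of_adj_start hmax)
      (fun _ ↦ hp.mem_edges_of_adj_end hmax) ho⟩

end SimpleGraph

theorem good_orientation_exists_general {V : Type*} [Fintype V]
    (G : SimpleGraph V) [DecidableRel G.Adj] :
    ∃ o : Sym2 V → V × V,
      (∀ e ∈ G.edgeSet, e = s((o e).1, (o e).2)) ∧
      (∀ v : V, 2 ≤ G.degree v →
        (∃ e ∈ G.edgeSet, (o e).1 = v) ∧ (∃ e ∈ G.edgeSet, (o e).2 = v)) := by
  obtain ⟨o, horient, hgood⟩ := G.exists_isGoodOrientation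
  refine ⟨o, horient, fun v hv ↦ hgood v ?_⟩
  have := Finset.one_lt_card_iff_nontrivial.mp hv
  rwa [Finset.Nontrivial, SimpleGraph.coe_neighborFinset] at this

/-- Every finite undirected graph admits a *good* orientation: an assignment of a
direction (ordered pair of endpoints) to each edge such that every vertex of degree
at least 2 has at least one outgoing and at least one incoming edge. -/
theorem good_orientation_exists {V : Type*} [Fintype V] [DecidableEq V]
    (G : SimpleGraph V) [DecidableRel G.Adj] :
    ∃ o : Sym2 V → V × V,
      (∀ e ∈ G.edgeSet, e = s((o e).1, (o e).2)) ∧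
      (∀ v : V, 2 ≤ G.degree v →
        (∃ e ∈ G.edgeSet, (o e).1 = v) ∧ (∃ e ∈ G.edgeSet, (o e).2 = v)) :=
  good_orientation_exists_general G
end

section
/- Let h : S¹ × ℝ → ℝ, (t,θ) ↦ h_t(θ), be smooth with h_t being T-periodic in θ, and let k ∈ ℝ, k ≠ 0. Consider the time-dependent flow on (−ε,ε) × (ℝ/Tℤ) of the vector field X(t, z, θ) = (−z ∂h_t/∂θ(θ), k). Then for every z₀ with |z₀| < ε there exists θ₀ such that the solution with initial condition (z₀, θ₀) is periodic with period T/k. -/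
open MeasureTheory intervalIntegral Set

/-- Fubini for interval integrals of continuous functions. -/
lemma swap_interval_integral (G : ℝ → ℝ → ℝ) (hG : Continuous fun p : ℝ × ℝ => G p.1 p.2)
    (a b c d : ℝ) :
    (∫ x in a..b, ∫ y in c..d, G x y) = ∫ y in c..d, ∫ x in a..b, G x y := by
  -- core case with a ≤ b, c ≤ d
  have core : ∀ a b c d : ℝ, a ≤ b → c ≤ d →
      (∫ x in a..b, ∫ y in c..d, G x y) = ∫ y in c..d, ∫ x in a..b, G x y := by
    intro a b c d hab hcd
    have hInt : Integrable (fun p : ℝ × ℝ => G p.1 p.2)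
        ((volume.restrict (Ioc a b)).prod (volume.restrict (Ioc c d))) := by
      rw [Measure.prod_restrict]
      have h1 : IntegrableOn (fun p : ℝ × ℝ => G p.1 p.2) (Icc a b ×ˢ Icc c d) := by
        exact hG.continuousOn.integrableOn_compact (isCompact_Icc.prod isCompact_Icc)
      exact h1.mono_set (prod_mono Ioc_subset_Icc_self Ioc_subset_Icc_self)
    have := MeasureTheory.integral_integral_swap (f := fun x y => G x y)
      (μ := volume.restrict (Ioc a b)) (ν := volume.restrict (Ioc c d)) hInt
    simp only [intervalIntegral.integral_of_le hab, intervalIntegral.integral_of_le hcd]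
    exact this
  rcases le_total a b with hab | hab <;> rcases le_total c d with hcd | hcd
  · exact core a b c d hab hcd
  · simp_rw [intervalIntegral.integral_symm d c]
    simp only [intervalIntegral.integral_neg]
    rw [core a b d c hab hcd]
  · simp_rw [intervalIntegral.integral_symm b a]
    simp only [intervalIntegral.integral_neg]
    rw [core b a c d hab hcd]
  · simp_rw [intervalIntegral.integral_symm b a, intervalIntegral.integral_symm d c]
    simp only [intervalIntegral.integral_neg, neg_neg]
    rw [core b a d c hab hcd]

/-- On the cylinder `(-ε,ε) × (ℝ/Tℤ)`, for the time-dependent vector field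
`X(t, z, θ) = (−z ∂h_t/∂θ(θ), k)` (the Hamiltonian vector field of
`H_t = k log|z| + h_t(θ)` for the b-symplectic form `(dz/z) ∧ dθ`),
every `z₀` with `|z₀| < ε` lies on a periodic solution of period `T/k` for a
suitable `θ₀`: the solution starting at `(z₀, θ₀)` returns to the same point of the
cylinder after time `T/k`. -/
theorem exists_periodic_orbit_b_surface (T k ε : ℝ) (hT : 0 < T) (hk : k ≠ 0) (hε : 0 < ε)
    (h : ℝ → ℝ → ℝ) (hsm : ContDiff ℝ (⊤ : ℕ∞) (fun p : ℝ × ℝ => h p.1 p.2))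
    (hper : ∀ t θ : ℝ, h t (θ + T) = h t θ) :
    ∀ z₀ : ℝ, |z₀| < ε → ∃ θ₀ : ℝ, ∃ z θ : ℝ → ℝ,
      z 0 = z₀ ∧ θ 0 = θ₀ ∧
      (∀ t : ℝ, HasDerivAt z (-(z t) * deriv (h t) (θ t)) t) ∧
      (∀ t : ℝ, HasDerivAt θ k t) ∧
      z (T / k) = z₀ ∧ θ (T / k) = θ₀ + T := by
  intro z₀ _
  -- partial derivative in θ
  set H : ℝ × ℝ → ℝ := fun p => h p.1 p.2 with hH
  set D : ℝ → ℝ → ℝ := fun t θ => fderiv ℝ H (t, θ) (0, 1) with hDdef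
  have hdiff : Differentiable ℝ H := hsm.differentiable (by simp)
  have hD : ∀ t θ : ℝ, HasDerivAt (h t) (D t θ) θ := by
    intro t θ
    have h1 : HasDerivAt (fun θ : ℝ => (t, θ)) ((0 : ℝ), (1 : ℝ)) θ := by
      have := ((hasDerivAt_const θ t).prodMk (hasDerivAt_id θ))
      simpa using this
    have h2 := (hdiff (t, θ)).hasFDerivAt.comp_hasDerivAt θ h1
    exact h2
  have hDc : Continuous (fun p : ℝ × ℝ => D p.1 p.2) := by
    have : Continuous (fderiv ℝ H) := hsm.continuous_fderiv (by simp)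
    exact (this.comp continuous_id).clm_apply continuous_const
  -- the function whose zero we seek
  set F : ℝ → ℝ := fun θ₀ => ∫ s in (0:ℝ)..(T / k), D s (θ₀ + k * s) with hFdef
  have hgc : Continuous (fun p : ℝ × ℝ => D p.2 (p.1 + k * p.2)) := by
    exact hDc.comp (continuous_snd.prodMk (continuous_fst.add (continuous_const.mul continuous_snd)))
  have hFc : Continuous F :=
    intervalIntegral.continuous_parametric_intervalIntegral_of_continuous'
      (f := fun θ₀ s => D s (θ₀ + k * s)) (μ := volume) hgc 0 (T / k)
  -- the average of F over a period vanishes (Fubini + FTC + periodicity)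
  have hFint : (∫ θ₀ in (0:ℝ)..T, F θ₀) = 0 := by
    have swap := swap_interval_integral (fun θ₀ s => D s (θ₀ + k * s))
      (by exact hgc) 0 T 0 (T / k)
    rw [hFdef]
    simp only []
    rw [swap]
    have inner : ∀ s : ℝ, (∫ θ₀ in (0:ℝ)..T, D s (θ₀ + k * s)) = 0 := by
      intro s
      have hd : ∀ θ₀ ∈ uIcc (0:ℝ) T, HasDerivAt (fun θ₀ => h s (θ₀ + k * s))
          (D s (θ₀ + k * s)) θ₀ := by
        intro θ₀ _
        have h1 : HasDerivAt (fun θ₀ : ℝ => θ₀ + k * s) 1 θ₀ := by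
          simpa using (hasDerivAt_id θ₀).add_const (k * s)
        have := (hD s (θ₀ + k * s)).comp θ₀ h1
        rw [mul_one] at this
        exact this
      have hint : IntervalIntegrable (fun θ₀ => D s (θ₀ + k * s)) volume 0 T := by
        exact ((hDc.comp (continuous_const.prodMk
          ((continuous_id).add continuous_const))).continuousOn).intervalIntegrable
      rw [intervalIntegral.integral_eq_sub_of_hasDerivAt hd hint]
      have : T + k * s = (k * s) + T := by ring
      rw [zero_add, this, hper s (k * s)]
      ring
    simp only [inner, intervalIntegral.integral_zero]
  -- find a zero of F by the mean value theorem
  obtain ⟨θ₀, _, hθ₀⟩ : ∃ c ∈ Ioo (0:ℝ) T, F c = ((∫ x in (0:ℝ)..T, F x) - 0) / (T - 0) := by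
    have hG : ∀ x : ℝ, HasDerivAt (fun u => ∫ x in (0:ℝ)..u, F x) (F x) x := by
      intro x
      exact intervalIntegral.integral_hasDerivAt_right
        (hFc.continuousOn.intervalIntegrable)
        (hFc.stronglyMeasurable.stronglyMeasurableAtFilter) hFc.continuousAt
    have := exists_hasDerivAt_eq_slope (fun u => ∫ x in (0:ℝ)..u, F x) F hT
      (fun x _ => (hG x).continuousAt.continuousWithinAt)
      (fun x _ => hG x)
    simpa using this
  have hFθ₀ : F θ₀ = 0 := by rw [hθ₀, hFint]; simp
  -- build the solution
  refine ⟨θ₀, fun t => z₀ * Real.exp (-∫ s in (0:ℝ)..t, D s (θ₀ + k * s)),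
    fun t => θ₀ + k * t, ?_, ?_, ?_, ?_, ?_, ?_⟩
  · simp
  · simp
  · intro t
    set g : ℝ → ℝ := fun s => D s (θ₀ + k * s) with hgdef
    have hgcont : Continuous g := hDc.comp
      (continuous_id.prodMk (continuous_const.add (continuous_const.mul continuous_id)))
    have hI : HasDerivAt (fun u => ∫ s in (0:ℝ)..u, g s) (g t) t :=
      intervalIntegral.integral_hasDerivAt_right (hgcont.continuousOn.intervalIntegrable)
        (hgcont.stronglyMeasurable.stronglyMeasurableAtFilter) hgcont.continuousAt
    have hz : HasDerivAt (fun u => z₀ * Real.exp (-∫ s in (0:ℝ)..u, g s))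
        (z₀ * (Real.exp (-∫ s in (0:ℝ)..t, g s) * -(g t))) t :=
      (hI.neg.exp).const_mul z₀
    have hderiv : deriv (h t) (θ₀ + k * t) = g t := (hD t (θ₀ + k * t)).deriv
    convert hz using 1
    rw [hderiv]
    ring
  · intro t
    simpa using ((hasDerivAt_id t).const_mul k).const_add θ₀
  · show z₀ * Real.exp (-∫ s in (0:ℝ)..(T / k), D s (θ₀ + k * s)) = z₀
    have : (∫ s in (0:ℝ)..(T / k), D s (θ₀ + k * s)) = 0 := hFθ₀
    rw [this]
    simp
  · show θ₀ + k * (T / k) = θ₀ + T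
    rw [mul_div_cancel₀ T hk]
end

section
/- In a finite graph, if the associated graph of a b-manifold is acyclic (a forest), then it is 2-colorable; hence every acyclic b-manifold admits a global defining function. -/
open SimpleGraph

private lemma path_cast_length {V : Type*} {G : SimpleGraph V} {u r r' : V}
    (h : r = r') (p : G.Path r u) : ((h ▸ p) : G.Path r' u).val.length = p.val.length := by
  subst h; rfl

/-- In an acyclic graph, for adjacent `u v` and paths from a common root `r`,
the path lengths differ by exactly one. -/
lemma acyclic_path_length_adj {V : Type*} {G : SimpleGraph V} (hG : G.IsAcyclic)
    {r u v : V} (h : G.Adj u v) (p : G.Path r u) (q : G.Path r v) :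
    q.val.length = p.val.length + 1 ∨ p.val.length = q.val.length + 1 := by
  classical
  by_cases hv : v ∈ p.val.support
  · right
    have hq : q = ⟨p.val.takeUntil v hv, p.prop.takeUntil hv⟩ :=
      hG.path_unique q _
    have hd : (⟨p.val.dropUntil v hv, p.prop.dropUntil hv⟩ : G.Path v u) =
        Path.singleton h.symm := hG.path_unique _ _
    have hlen : (p.val.takeUntil v hv).length + (p.val.dropUntil v hv).length
        = p.val.length := by
      rw [← SimpleGraph.Walk.length_append, SimpleGraph.Walk.take_spec]
    have h1 : (p.val.dropUntil v hv).length = 1 := by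
      have := congrArg (fun x : G.Path v u => x.val.length) hd
      simpa [Path.singleton] using this
    have hqlen : q.val.length = (p.val.takeUntil v hv).length := by rw [hq]
    omega
  · left
    have hq' : (SimpleGraph.Walk.cons h.symm p.val.reverse).IsPath :=
      p.prop.reverse.cons (by simpa using hv)
    have hp : q = ⟨(SimpleGraph.Walk.cons h.symm p.val.reverse).reverse, hq'.reverse⟩ :=
      hG.path_unique q _
    have := congrArg (fun x : G.Path r v => x.val.length) hp
    simpa using this

/-- A finite acyclic graph (a forest) is 2-colorable.  In particular, since a b-manifold
admits a global defining function iff its associated graph is 2-colorable, every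
acyclic b-manifold admits a global defining function. -/
theorem acyclic_graph_two_colorable {V : Type*} [Fintype V] (G : SimpleGraph V)
    (hG : G.IsAcyclic) :
    ∃ c : V → Bool, ∀ u v : V, G.Adj u v → c u ≠ c v := by
  classical
  have hreach : ∀ v : V, G.Reachable ((G.connectedComponentMk v).out) v := by
    intro v
    exact ConnectedComponent.exact (Quot.out_eq _)
  let P : ∀ v : V, G.Path ((G.connectedComponentMk v).out) v :=
    fun v => (hreach v).some.toPath
  refine ⟨fun v => decide (Odd (P v).val.length), ?_⟩
  intro u v huv hc
  have hcomp : G.connectedComponentMk u = G.connectedComponentMk v :=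
    ConnectedComponent.sound huv.reachable
  have hru : (G.connectedComponentMk u).out = (G.connectedComponentMk v).out := by
    rw [hcomp]
  have key := acyclic_path_length_adj hG huv (hru ▸ (P u)) (P v)
  rw [path_cast_length hru (P u)] at key
  simp only [decide_eq_decide] at hc
  rcases key with h1 | h1 <;> rw [h1] at hc <;>
    simp [Nat.odd_iff, Nat.even_iff, Nat.add_mod] at hc <;> omega
end

section
/- Let ω̃ be an area form on a surface Σ, let z : Σ → ℝ be smooth with 0 a regular value, and let s_ε : ℝ∖{0} → ℝ be smooth with s_ε'(x) ≠ 0 for x ∈ (−ε,ε)∖{0}, s_ε(x) = log|x| near 0 (case m=1), s_ε(x) = x for x > 2ε/3 and s_ε(x) = (−1)^m x for x < −2ε/3. Then ω := s_ε'(z) ω̃ defined on the ε-neighbourhood of z⁻¹(0), glued with ω̃ on {z > 2ε/3} and (−1)^m ω̃ on {z < −2ε/3}, is a b^m-symplectic form on Σ with critical set z⁻¹(0); moreover, if H̃ = z near z⁻¹(0), then H := s_ε ∘ z satisfies X_H^{ω} = X_{H̃}^{ω̃} on the ε-neighbourhood. -/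
open Module

/-- Singularization of a symplectic surface along curves.  Let `E` be a 2-dimensional
real vector space carrying an area form `ω̃` (a smooth nowhere-degenerate skew 2-form),
let `z` be a smooth function with `0` a regular value, cutting out the curves
`Z = z⁻¹(0)`, and let `s = s_ε` be smooth away from `0` with `s'(x) ≠ 0` on
`(−ε,ε)∖{0}`, `s(x) = log|x|` near `0` (case `m = 1`), `s(x) = x` for `x > 2ε/3` and
`s(x) = (−1)^m x` for `x < −2ε/3`.  Then `ω := s'(z(p)) · ω̃` is a b^m-symplectic form
with critical set `z⁻¹(0)`: it is nondegenerate away from `z⁻¹(0)`, agrees with `ω̃`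
on `{z > 2ε/3}` and with `(−1)^m ω̃` on `{z < −2ε/3}`, and (for `m = 1`)
`z^m · (coefficient of ω)` extends across `Z` with value `1`.  Moreover, if
`H̃ = z` near `z⁻¹(0)`, then `H := s ∘ z` satisfies `X_H^ω = X_{H̃}^{ω̃}` there. -/
theorem singularization_of_symplectic_surface {E : Type*} [NormedAddCommGroup E]
    [NormedSpace ℝ E] [FiniteDimensional ℝ E] (hdim : finrank ℝ E = 2)
    (m : ℕ) (hm : 1 ≤ m) (ε : ℝ) (hε : 0 < ε)
    (ω' : E → E →L[ℝ] E →L[ℝ] ℝ) (hωsm : ContDiff ℝ (⊤ : ℕ∞) ω')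
    (hskew : ∀ (p : E) (v w : E), ω' p v w = - ω' p w v)
    (hnd : ∀ (p : E) (v : E), v ≠ 0 → ∃ w : E, ω' p v w ≠ 0)
    (z : E → ℝ) (hz : ContDiff ℝ (⊤ : ℕ∞) z)
    (hreg : ∀ p : E, z p = 0 → fderiv ℝ z p ≠ 0)
    (s : ℝ → ℝ) (hs : ContDiffOn ℝ (⊤ : ℕ∞) s {x : ℝ | x ≠ 0})
    (hs' : ∀ x : ℝ, x ≠ 0 → |x| < ε → deriv s x ≠ 0)
    (hslog : m = 1 → ∃ δ > 0, ∀ x : ℝ, x ≠ 0 → |x| < δ → s x = Real.log |x|)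
    (hsp : ∀ x : ℝ, 2 * ε / 3 < x → s x = x)
    (hsn : ∀ x : ℝ, x < -(2 * ε / 3) → s x = (-1 : ℝ) ^ m * x) :
    ((∀ p : E, z p ≠ 0 → ∀ v : E, v ≠ 0 → ∃ w : E, deriv s (z p) * ω' p v w ≠ 0) ∧
     (∀ p : E, 2 * ε / 3 < z p → deriv s (z p) • ω' p = ω' p) ∧
     (∀ p : E, z p < -(2 * ε / 3) → deriv s (z p) • ω' p = ((-1 : ℝ) ^ m) • ω' p) ∧
     (m = 1 → ∀ p : E, z p = 0 →
        Filter.Tendsto (fun q : E => z q ^ m * deriv s (z q))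
          (nhdsWithin p {q : E | z q ≠ 0}) (nhds 1))) ∧
    (∀ H' : E → ℝ, (∀ p : E, |z p| < ε → H' p = z p) →
      ∀ p : E, z p ≠ 0 → |z p| < ε →
        ∀ X X' : E,
          (∀ v : E, deriv s (z p) * ω' p X v = - fderiv ℝ (fun q => s (z q)) p v) →
          (∀ v : E, ω' p X' v = - fderiv ℝ H' p v) →
          X = X') := by
  have hzc : Continuous z := hz.continuous
  -- deriv s on the positive tail
  have hdp : ∀ x : ℝ, 2 * ε / 3 < x → deriv s x = 1 := by
    intro x hx
    have heq : s =ᶠ[nhds x] id :=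
      Filter.eventuallyEq_of_mem (Ioi_mem_nhds hx) (fun y hy => hsp y hy)
    rw [heq.deriv_eq, deriv_id]
  have hdn : ∀ x : ℝ, x < -(2 * ε / 3) → deriv s x = (-1 : ℝ) ^ m := by
    intro x hx
    have heq : s =ᶠ[nhds x] (fun y => (-1 : ℝ) ^ m * y) :=
      Filter.eventuallyEq_of_mem (Iio_mem_nhds hx) (fun y hy => hsn y hy)
    rw [heq.deriv_eq, deriv_const_mul_field]
    simp
  have hεlt : 2 * ε / 3 < ε := by linarith
  have hdne : ∀ x : ℝ, x ≠ 0 → deriv s x ≠ 0 := by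
    intro x hx
    rcases lt_or_ge (|x|) ε with h | h
    · exact hs' x hx h
    · rcases le_abs.mp h with h1 | h1
      · rw [hdp x (by linarith)]; exact one_ne_zero
      · rw [hdn x (by linarith)]
        exact pow_ne_zero _ (by norm_num)
  refine ⟨⟨?_, ?_, ?_, ?_⟩, ?_⟩
  · intro p hp v hv
    obtain ⟨w, hw⟩ := hnd p v hv
    exact ⟨w, mul_ne_zero (hdne _ hp) hw⟩
  · intro p hp
    rw [hdp _ hp, one_smul]
  · intro p hp
    rw [hdn _ hp]
  · intro hm1 p hp
    obtain ⟨δ, hδ, hlog⟩ := hslog hm1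
    have hmem : {q : E | |z q| < δ} ∈ nhdsWithin p {q : E | z q ≠ 0} := by
      apply nhdsWithin_le_nhds
      have : IsOpen {q : E | |z q| < δ} :=
        isOpen_lt (continuous_abs.comp hzc) continuous_const
      exact this.mem_nhds (by simp [hp, hδ])
    have hself : {q : E | z q ≠ 0} ∈ nhdsWithin p {q : E | z q ≠ 0} :=
      self_mem_nhdsWithin
    have hev : (fun q : E => z q ^ m * deriv s (z q)) =ᶠ[nhdsWithin p {q : E | z q ≠ 0}]
        (fun _ => (1 : ℝ)) := by
      filter_upwards [hmem, hself] with q hq1 hq2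
      have hds : deriv s (z q) = (z q)⁻¹ := by
        have hopen : IsOpen {x : ℝ | x ≠ 0 ∧ |x| < δ} :=
          isOpen_ne.inter (isOpen_lt continuous_abs continuous_const)
        have heq : s =ᶠ[nhds (z q)] Real.log := by
          refine Filter.eventuallyEq_of_mem (hopen.mem_nhds ⟨hq2, hq1⟩) ?_
          intro y hy
          rw [hlog y hy.1 hy.2, Real.log_abs]
        rw [heq.deriv_eq, Real.deriv_log]
      rw [hds, hm1, pow_one, mul_inv_cancel₀ hq2]
    exact Filter.Tendsto.congr' hev.symm tendsto_const_nhds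
  · intro H' hH' p hp hpε X X' hX hX'
    set c := deriv s (z p) with hc
    have hcne : c ≠ 0 := hdne _ hp
    have hsdiff : DifferentiableAt ℝ s (z p) :=
      (hs.contDiffAt (isOpen_ne.mem_nhds hp)).differentiableAt (by simp)
    have hzdiff : DifferentiableAt ℝ z p := (hz.differentiable (by simp)) p
    have happ : ∀ (L : ℝ →L[ℝ] ℝ) (t : ℝ), L t = t * L 1 := by
      intro L t
      rw [← smul_eq_mul, ← map_smul, smul_eq_mul, mul_one]
    have hchain : ∀ v : E, fderiv ℝ (fun q => s (z q)) p v = c * fderiv ℝ z p v := by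
      intro v
      have := fderiv_comp (𝕜 := ℝ) p hsdiff hzdiff
      rw [show (fun q => s (z q)) = s ∘ z from rfl, this]
      simp only [ContinuousLinearMap.comp_apply]
      rw [happ (fderiv ℝ s (z p)) (fderiv ℝ z p v), fderiv_apply_one_eq_deriv, mul_comm]
    have hHeq : ∀ v : E, fderiv ℝ H' p v = fderiv ℝ z p v := by
      have heq : H' =ᶠ[nhds p] z := by
        have hopen : IsOpen {q : E | |z q| < ε} :=
          isOpen_lt (continuous_abs.comp hzc) continuous_const
        exact Filter.eventuallyEq_of_mem (hopen.mem_nhds hpε) (fun q hq => hH' q hq)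
      rw [heq.fderiv_eq]
      intro v; rfl
    have hXv : ∀ v : E, ω' p X v = ω' p X' v := by
      intro v
      have h1 := hX v
      rw [hchain v, ← neg_mul] at h1
      have h2 : ω' p X v = - fderiv ℝ z p v :=
        mul_left_cancel₀ hcne (by linarith : c * (ω' p X v) = c * (-(fderiv ℝ z p v)))
      rw [h2, hX' v, hHeq v]
    by_contra hne
    obtain ⟨w, hw⟩ := hnd p (X - X') (sub_ne_zero.mpr hne)
    apply hw
    rw [map_sub, ContinuousLinearMap.sub_apply, hXv w, sub_self]
end
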